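/- Let X be a real Banach space, let (A_i) be an approximation scheme in X, and let Y be a linear subspace of X having a countable (or finite) Hamel basis, i.e., Y is the algebraic linear span of countably many vectors of X. Then Y fails Shapiro's Theorem relative to (A_i): there exist a nonincreasing sequence of nonnegative reals ε_n → 0 and a function C : Y → [0,∞) such that E(y, A_n) ≤ C(y) ε_n for all n and all y ∈ Y. In particular, every finite dimensional subspace of X fails Shapiro's Theorem relative to (A_i). -/

import Mathlib

open Metric Filter Pointwise

/-- `(A, K)` is an approximation scheme on `X`: the sets `A n` form a strictly increasing
chain, `A n + A n ⊆ A (K n)` with `K n ≥ n`, each `A n` is closed under scalar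
multiplication, and `⋃ n, A n` is dense in `X`. -/
def IsApproximationScheme {X : Type*} [NormedAddCommGroup X] [NormedSpace ℝ X]
    (A : ℕ → Set X) (K : ℕ → ℕ) : Prop :=
  (∀ n, A n ⊂ A (n + 1)) ∧
  (∀ n, n ≤ K n ∧ A n + A n ⊆ A (K n)) ∧
  (∀ (n : ℕ) (c : ℝ), c • A n ⊆ A n) ∧
  Dense (⋃ n, A n)

/-- Admissible error sequences: nonnegative, nonincreasing, tending to `0`. -/
def NullSeq (ε : ℕ → ℝ) : Prop :=
  (∀ n, 0 ≤ ε n) ∧ Antitone ε ∧ Tendsto ε atTop (nhds 0)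

/-- The subspace `Y` of `X` fails Shapiro's Theorem relative to `(A n)`: there are a
nonincreasing null sequence `ε` and a nonnegative function `C` on `Y` such that
`E(y, A n) ≤ C y * ε n` for all `n` and all `y ∈ Y`. -/
def FailsShapiroFor {X : Type*} [NormedAddCommGroup X] (Y : Set X) (A : ℕ → Set X) : Prop :=
  ∃ ε : ℕ → ℝ, NullSeq ε ∧ ∃ C : X → ℝ, (∀ y ∈ Y, 0 ≤ C y) ∧
    ∀ y ∈ Y, ∀ n : ℕ, Metric.infDist y (A n) ≤ C y * ε n

/-! Write `y ∈ span s` as `∑ i, c i • v i` with `v : Fin m → s`. Because `A j + A j ⊆ A (K j)`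
and every `A j` is a cone, `E(y, A (K^[m] j)) ≤ ∑ i, |c i| * E(v i, A j)`. Inverting
`j ↦ K^[m] (j + 1)` turns the right-hand side into an antitone null sequence `u (m, v)` in `n`,
up to the factor `∑ i, |c i|`. There are only countably many pairs `(m, v)`, and
`2⁻¹ ^ n + ∑' k, 2⁻¹ ^ k * u k n / (u k 0 + 1)` dominates all of them at once; being positive, it
also absorbs the finitely many small `n` into the constant. -/

open Topology

lemma NullSeq.add {ε δ : ℕ → ℝ} (hε : NullSeq ε) (hδ : NullSeq δ) :
    NullSeq fun n => ε n + δ n :=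
  ⟨fun n => add_nonneg (hε.1 n) (hδ.1 n), fun _ _ hmn => add_le_add (hε.2.1 hmn) (hδ.2.1 hmn),
    by simpa using hε.2.2.add hδ.2.2⟩

lemma nullSeq_tsum {ι : Type*} {v : ι → ℕ → ℝ} {b : ι → ℝ} (hb : Summable b)
    (hv : ∀ i, Antitone (v i)) (hv0 : ∀ i, Tendsto (v i) atTop (𝓝 0)) (hvb : ∀ i n, v i n ≤ b i) :
    NullSeq fun n => ∑' i, v i n := by
  have hv_nonneg : ∀ i n, 0 ≤ v i n := fun i n => (hv i).le_of_tendsto (hv0 i) n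
  have hsum : ∀ n, Summable fun i => v i n := fun n =>
    hb.of_nonneg_of_le (fun i => hv_nonneg i n) fun i => hvb i n
  refine ⟨fun n => tsum_nonneg fun i => hv_nonneg i n,
    fun m n hmn => (hsum n).tsum_le_tsum (fun i => hv i hmn) (hsum m), ?_⟩
  simpa using tendsto_tsum_of_dominated_convergence hb hv0 <| .of_forall fun n i => by
    rw [Real.norm_of_nonneg (hv_nonneg i n)]; exact hvb i n

lemma exists_nullSeq_forall_le_mul {ι : Type*} [Countable ι] (u : ι → ℕ → ℝ)
    (hu : ∀ i, Antitone (u i)) (hu0 : ∀ i, Tendsto (u i) atTop (𝓝 0)) :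
    ∃ ε, NullSeq ε ∧ (∀ n, 0 < ε n) ∧ ∀ i, ∃ C, ∀ n, u i n ≤ C * ε n := by
  obtain ⟨e, he⟩ := Countable.exists_injective_nat ι
  have hu_nonneg : ∀ i n, 0 ≤ u i n := fun i n => (hu i).le_of_tendsto (hu0 i) n
  set w : ι → ℝ := fun i => 2⁻¹ ^ e i / (u i 0 + 1)
  have hw : ∀ i, 0 < w i := fun i => div_pos (by positivity) (by linarith [hu_nonneg i 0])
  have hb : Summable fun i => (2⁻¹ : ℝ) ^ e i :=
    (summable_geometric_of_lt_one (by norm_num) (by norm_num)).comp_injective he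
  have hvb : ∀ i n, w i * u i n ≤ 2⁻¹ ^ e i := fun i n => by
    calc w i * u i n ≤ w i * (u i 0 + 1) :=
          mul_le_mul_of_nonneg_left (by linarith [hu i n.zero_le]) (hw i).le
      _ = 2⁻¹ ^ e i := div_mul_cancel₀ _ (by linarith [hu_nonneg i 0])
  have hgeom : NullSeq fun n => (2⁻¹ : ℝ) ^ n :=
    ⟨fun n => by positivity, fun m n hmn => pow_le_pow_of_le_one (by norm_num) (by norm_num) hmn,
      tendsto_pow_atTop_nhds_zero_of_lt_one (by norm_num) (by norm_num)⟩
  have htsum := nullSeq_tsum (v := fun i n => w i * u i n) hb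
    (fun i _ _ hmn => mul_le_mul_of_nonneg_left (hu i hmn) (hw i).le)
    (fun i => by simpa using (hu0 i).const_mul (w i)) hvb
  refine ⟨_, hgeom.add htsum, fun n => add_pos_of_pos_of_nonneg (by positivity) (htsum.1 n),
    fun i => ⟨(w i)⁻¹, fun n => ?_⟩⟩
  have hv_le : w i * u i n ≤ ∑' j, w j * u j n :=
    (hb.of_nonneg_of_le (fun j => mul_nonneg (hw j).le (hu_nonneg j n)) fun j => hvb j n).le_tsum i
      fun j _ => mul_nonneg (hw j).le (hu_nonneg j n)
  calc u i n = (w i)⁻¹ * (w i * u i n) := (inv_mul_cancel_left₀ (hw i).ne' _).symm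
    _ ≤ (w i)⁻¹ * (2⁻¹ ^ n + ∑' j, w j * u j n) :=
        mul_le_mul_of_nonneg_left (by linarith [pow_pos (by norm_num : (0:ℝ) < 2⁻¹) n])
          (inv_nonneg.2 (hw i).le)

lemma exists_nonneg_forall_le_mul_of_eventually {ε f : ℕ → ℝ} (hε : ∀ n, 0 < ε n) {C : ℝ}
    (h : ∀ᶠ n in atTop, f n ≤ C * ε n) : ∃ C' ≥ 0, ∀ n, f n ≤ C' * ε n := by
  obtain ⟨N, hN⟩ := eventually_atTop.1 h
  obtain ⟨M, hM⟩ := ((Set.finite_Iio N).image fun n => f n / ε n).bddAbove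
  refine ⟨max (max C M) 0, le_max_right _ _, fun n => ?_⟩
  rcases lt_or_ge n N with hn | hn
  · have : f n / ε n ≤ M := hM ⟨n, hn, rfl⟩
    calc f n ≤ M * ε n := (div_le_iff₀ (hε n)).1 this
      _ ≤ _ := mul_le_mul_of_nonneg_right ((le_max_right C M).trans (le_max_left _ _)) (hε n).le
  · calc f n ≤ C * ε n := hN n hn
      _ ≤ _ := mul_le_mul_of_nonneg_right ((le_max_left C M).trans (le_max_left _ _)) (hε n).le

lemma exists_monotone_tendsto_atTop_eventually_le (f : ℕ → ℕ) :
    ∃ g : ℕ → ℕ, Monotone g ∧ Tendsto g atTop atTop ∧ ∀ᶠ n in atTop, f (g n) ≤ n := by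
  classical
  refine ⟨fun n => Nat.findGreatest (fun j => f j ≤ n) n,
    fun m n hmn => Nat.findGreatest_mono (fun j hj => hj.trans hmn) hmn,
    tendsto_atTop_atTop.2 fun J => ⟨max (f J) J, fun n hn => ?_⟩,
    eventually_atTop.2 ⟨f 0, fun n hn =>
      Nat.findGreatest_spec (P := fun j => f j ≤ n) n.zero_le hn⟩⟩
  exact Nat.le_findGreatest (le_of_max_le_right hn) (le_of_max_le_left hn)

namespace Metric

variable {E : Type*}

lemma infDist_add_le [SeminormedAddCommGroup E] {s t : Set E} (hs : s.Nonempty)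
    (ht : t.Nonempty) (x y : E) : infDist (x + y) (s + t) ≤ infDist x s + infDist y t := by
  have key : ∀ a ∈ s, ∀ b ∈ t, infDist (x + y) (s + t) ≤ dist x a + dist y b := fun a ha b hb =>
    (infDist_le_dist_of_mem (Set.add_mem_add ha hb)).trans (dist_add_add_le _ _ _ _)
  have : infDist (x + y) (s + t) - infDist y t ≤ infDist x s :=
    (le_infDist hs).2 fun a ha => sub_le_comm.1 <| (le_infDist ht).2 fun b hb => by
      linarith [key a ha b hb]
  linarith

lemma infDist_smul_le {𝕜 : Type*} [NormedDivisionRing 𝕜] [SeminormedAddCommGroup E]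
    [Module 𝕜 E] [NormSMulClass 𝕜 E] {s : Set E} (hs : s.Nonempty) {c : 𝕜} (hcs : c • s ⊆ s)
    (x : E) : infDist (c • x) s ≤ ‖c‖ * infDist x s := by
  rcases eq_or_ne c 0 with rfl | hc
  · obtain ⟨a, ha⟩ := hs
    have h0 : (0 : E) ∈ s := by simpa using hcs (Set.smul_mem_smul_set ha)
    simp [infDist_zero_of_mem h0]
  · exact (infDist_le_infDist_of_subset hcs (hs.smul_set)).trans_eq (infDist_smul₀ hc s x)

end Metric

namespace IsApproximationScheme

variable {X : Type*} [NormedAddCommGroup X] [NormedSpace ℝ X] {A : ℕ → Set X} {K : ℕ → ℕ}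
  (hA : IsApproximationScheme A K)
include hA

protected lemma monotone : Monotone A :=
  monotone_nat_of_le_succ fun n => (hA.1 n).subset

lemma zero_mem {n : ℕ} (hn : n ≠ 0) : (0 : X) ∈ A n := by
  obtain ⟨a, ha, -⟩ := Set.exists_of_ssubset (hA.1 0)
  have h0 : (0 : X) ∈ A 1 := by simpa using hA.2.2.1 1 0 (Set.smul_mem_smul_set ha)
  exact hA.monotone (Nat.one_le_iff_ne_zero.2 hn) h0

lemma le_iterate (m j : ℕ) : j ≤ K^[m] j :=
  Function.id_le_iterate_of_id_le (fun n => (hA.2.1 n).1) m j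

lemma infDist_le_of_le {m n : ℕ} (hm : m ≠ 0) (hmn : m ≤ n) (x : X) :
    infDist x (A n) ≤ infDist x (A m) :=
  infDist_le_infDist_of_subset (hA.monotone hmn) ⟨0, hA.zero_mem hm⟩

lemma tendsto_infDist (x : X) : Tendsto (fun n => infDist x (A n)) atTop (𝓝 0) := by
  refine tendsto_order.2 ⟨fun a ha => .of_forall fun n => ha.trans_le infDist_nonneg,
    fun δ hδ => ?_⟩
  obtain ⟨b, hb, hxb⟩ := Metric.mem_closure_iff.1 (hA.2.2.2 x) δ hδ
  obtain ⟨N, hbN⟩ := Set.mem_iUnion.1 hb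
  exact eventually_atTop.2 ⟨N, fun n hn =>
    (infDist_le_dist_of_mem (hA.monotone hn hbN)).trans_lt hxb⟩

lemma infDist_sum_smul_le {ι : Type*} (F : Finset ι) (c : ι → ℝ) (v : ι → X) {j : ℕ}
    (hj : j ≠ 0) :
    infDist (∑ i ∈ F, c i • v i) (A (K^[F.card] j)) ≤ ∑ i ∈ F, |c i| * infDist (v i) (A j) := by
  induction F using Finset.cons_induction with
  | empty => simp [infDist_zero_of_mem (hA.zero_mem hj)]
  | cons i F hi ih =>
    set N := K^[F.card] j
    have hjN : j ≤ N := hA.le_iterate _ j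
    have hN : (0 : X) ∈ A N := hA.zero_mem (by omega)
    rw [Finset.sum_cons, Finset.sum_cons, Finset.card_cons, Function.iterate_succ_apply']
    calc infDist (c i • v i + ∑ i ∈ F, c i • v i) (A (K N))
        ≤ infDist (c i • v i) (A N) + infDist (∑ i ∈ F, c i • v i) (A N) :=
          (infDist_le_infDist_of_subset (hA.2.1 N).2 ⟨0 + 0, Set.add_mem_add hN hN⟩).trans
            (infDist_add_le ⟨0, hN⟩ ⟨0, hN⟩ _ _)
      _ ≤ |c i| * infDist (v i) (A j) + ∑ i ∈ F, |c i| * infDist (v i) (A j) := by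
          refine add_le_add ?_ ih
          calc infDist (c i • v i) (A N) ≤ ‖c i‖ * infDist (v i) (A N) :=
                infDist_smul_le ⟨0, hN⟩ (hA.2.2.1 N (c i)) _
            _ ≤ |c i| * infDist (v i) (A j) :=
                mul_le_mul_of_nonneg_left (hA.infDist_le_of_le hj hjN _) (abs_nonneg _)

end IsApproximationScheme

lemma failsShapiroFor_of_eventually_le {X : Type*} [NormedAddCommGroup X] {Y : Set X}
    {A : ℕ → Set X} {ε : ℕ → ℝ} (hε : NullSeq ε) (hε_pos : ∀ n, 0 < ε n)
    (h : ∀ y ∈ Y, ∃ C, ∀ᶠ n in atTop, infDist y (A n) ≤ C * ε n) : FailsShapiroFor Y A := by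
  choose! C₀ hC₀ using h
  choose! C hC_nonneg hC using fun y hy =>
    exists_nonneg_forall_le_mul_of_eventually hε_pos (hC₀ y hy)
  exact ⟨ε, hε, C, hC_nonneg, hC⟩

theorem failsShapiroFor_span_of_countable {X : Type*} [NormedAddCommGroup X] [NormedSpace ℝ X]
    {A : ℕ → Set X} {K : ℕ → ℕ} (hA : IsApproximationScheme A K) {s : Set X}
    (hs : s.Countable) : FailsShapiroFor (Submodule.span ℝ s : Set X) A := by
  have := hs.to_subtype
  choose g hg_mono hg_top hg_le using fun m =>
    exists_monotone_tendsto_atTop_eventually_le fun j => K^[m] (j + 1)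
  set u : (Σ m, Fin m → s) → ℕ → ℝ := fun a n => ∑ i, infDist (a.2 i : X) (A (g a.1 n + 1))
  obtain ⟨ε, hε, hε_pos, hu⟩ := exists_nullSeq_forall_le_mul u
    (fun a m n hmn => Finset.sum_le_sum fun i _ =>
      hA.infDist_le_of_le (Nat.succ_ne_zero _) (Nat.succ_le_succ (hg_mono a.1 hmn)) _)
    (fun a => by simpa using tendsto_finsetSum Finset.univ fun i _ =>
      (hA.tendsto_infDist (a.2 i : X)).comp ((tendsto_add_atTop_nat 1).comp (hg_top a.1)))
  refine failsShapiroFor_of_eventually_le hε hε_pos fun y hy => ?_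
  obtain ⟨m, c, v, rfl⟩ := Submodule.mem_span_set'.1 hy
  obtain ⟨C, hC⟩ := hu ⟨m, v⟩
  refine ⟨(∑ i, |c i|) * C, (hg_le m).mono fun n hn => ?_⟩
  calc infDist (∑ i, c i • (v i : X)) (A n)
      ≤ infDist (∑ i, c i • (v i : X)) (A (K^[m] (g m n + 1))) :=
        hA.infDist_le_of_le
          (Nat.pos_iff_ne_zero.1 ((g m n).succ_pos.trans_le (hA.le_iterate m _))) hn _
    _ ≤ ∑ i, |c i| * infDist (v i : X) (A (g m n + 1)) := by
        simpa using hA.infDist_sum_smul_le Finset.univ c (fun i => (v i : X)) (Nat.succ_ne_zero _)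
    _ ≤ ∑ i, |c i| * u ⟨m, v⟩ n := Finset.sum_le_sum fun i _ =>
        mul_le_mul_of_nonneg_left (Finset.single_le_sum
          (f := fun i => infDist (v i : X) (A (g m n + 1))) (fun i _ => infDist_nonneg)
          (Finset.mem_univ i)) (abs_nonneg _)
    _ ≤ (∑ i, |c i|) * (C * ε n) := by
        rw [← Finset.sum_mul]
        exact mul_le_mul_of_nonneg_left (hC n) (Finset.sum_nonneg fun i _ => abs_nonneg _)
    _ = (∑ i, |c i|) * C * ε n := (mul_assoc _ _ _).symm

theorem countable_span_fails_shapiro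
    {X : Type*} [NormedAddCommGroup X] [NormedSpace ℝ X]
    (A : ℕ → Set X) (K : ℕ → ℕ) (hA : IsApproximationScheme A K) :
    (∀ s : Set X, s.Countable → FailsShapiroFor (Submodule.span ℝ s : Set X) A) ∧
    (∀ Y : Submodule ℝ X, FiniteDimensional ℝ Y → FailsShapiroFor (Y : Set X) A) := by
  refine ⟨fun s hs => failsShapiroFor_span_of_countable hA hs, fun Y hY => ?_⟩
  obtain ⟨S, rfl⟩ := (Submodule.fg_iff_finiteDimensional Y).2 hY
  exact failsShapiroFor_span_of_countable hA S.countable_toSet
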